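/- Assume hᵢ > 0 for all i ∈ {1,…,n}, 0 < γᵢ < 1 for all i ∈ {1,…,n−1}, and let u ∈ ℝⁿ, u₀ ∈ ℝ. If α_{n,i}·|uᵢ − u₀| < λ_min(S⁰_x(h,γ)) for every i ∈ {1,…,n}, then the symmetric 3n×3n matrix S_x(w,γ,u₀) is positive definite (where w is any state vector with height coordinates h and x-velocity coordinates u). -/

import Mathlib

/-!
Write `S_x = S⁰_x + C`, where `C` couples only the `i`-th height and `i`-th velocity
coordinates, with weight `dᵢ = α_{n,i}(uᵢ − u₀)`. For `v = (a, b, c)` this gives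
`vᵀ S_x v ≥ λ_min(S⁰_x) |v|² + Σᵢ 2 dᵢ aᵢ bᵢ`, and since `2|aᵢ bᵢ| ≤ aᵢ² + bᵢ²` and
`|dᵢ| < λ_min(S⁰_x)`, every coordinate contributes positively. Symmetry of `ΔΓ` comes
from `α_{n,i} α_{i,k} = α_{n,min(i,k)}`.
-/

open Matrix

namespace MLSW7

noncomputable def alpha (n : ℕ) (ρ : Fin n → ℝ) (i k : Fin n) : ℝ :=
  if k < i then ρ k / ρ i else 1

noncomputable def Gam (n : ℕ) (ρ : Fin n → ℝ) : Matrix (Fin n) (Fin n) ℝ :=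
  Matrix.of (alpha n ρ)

/-- `α_{n,i}`. -/
noncomputable def alphaN (n : ℕ) (ρ : Fin n → ℝ) (i : Fin n) : ℝ :=
  if h : n - 1 < n then alpha n ρ ⟨n - 1, h⟩ i else 1

noncomputable def Delta (n : ℕ) (ρ : Fin n → ℝ) : Matrix (Fin n) (Fin n) ℝ :=
  Matrix.diagonal (alphaN n ρ)

/-- The density ratio `γᵢ = ρᵢ/ρᵢ₊₁`. -/
noncomputable def gam (n : ℕ) (ρ : Fin n → ℝ) (i : Fin (n - 1)) : ℝ :=
  ρ ⟨i.val, by have := i.isLt; omega⟩ / ρ ⟨i.val + 1, by have := i.isLt; omega⟩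

/-- A 3×3 block matrix with n×n blocks, rows `[[A,B,C],[D,E,F],[G,H,K]]`. -/
def blk3 {n : ℕ} (A B C D E F G H K : Matrix (Fin n) (Fin n) ℝ) :
    Matrix (Fin n ⊕ Fin n ⊕ Fin n) (Fin n ⊕ Fin n ⊕ Fin n) ℝ :=
  Matrix.fromBlocks A (Matrix.fromCols B C) (Matrix.fromRows D G)
    (Matrix.fromBlocks E F H K)

/-- `S⁰_x(h,γ) = diag(ΔΓ, ΔH, ΔH)`. -/
noncomputable def S0 (n : ℕ) (ρ : Fin n → ℝ) (h : Fin n → ℝ) :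
    Matrix (Fin n ⊕ Fin n ⊕ Fin n) (Fin n ⊕ Fin n ⊕ Fin n) ℝ :=
  blk3 (Delta n ρ * Gam n ρ) 0 0
    0 (Delta n ρ * Matrix.diagonal h) 0
    0 0 (Delta n ρ * Matrix.diagonal h)

/-- The symmetrizer candidate `S_x(w,γ,u₀)`; it depends only on the height
coordinates `h` and x-velocity coordinates `u` of the state vector `w`. -/
noncomputable def Sx (n : ℕ) (ρ : Fin n → ℝ) (h u : Fin n → ℝ) (u₀ : ℝ) :
    Matrix (Fin n ⊕ Fin n ⊕ Fin n) (Fin n ⊕ Fin n ⊕ Fin n) ℝ :=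
  blk3 (Delta n ρ * Gam n ρ) (Delta n ρ * (Matrix.diagonal u - u₀ • 1)) 0
    (Delta n ρ * (Matrix.diagonal u - u₀ • 1)) (Delta n ρ * Matrix.diagonal h) 0
    0 0 (Delta n ρ * Matrix.diagonal h)

/-- Smallest eigenvalue: infimum of the Rayleigh quotient over the unit sphere. -/
noncomputable def lamMin {m : Type*} [Fintype m] (M : Matrix m m ℝ) : ℝ :=
  ⨅ x : {x : m → ℝ // x ⬝ᵥ x = 1}, x.1 ⬝ᵥ M.mulVec x.1

lemma bddBelow_range_dotProduct_mulVec_unit {m : Type*} [Fintype m] (M : Matrix m m ℝ) :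
    BddBelow (Set.range fun x : {x : m → ℝ // x ⬝ᵥ x = 1} => x.1 ⬝ᵥ M *ᵥ x.1) := by
  have hsphere : IsCompact {x : m → ℝ | x ⬝ᵥ x = 1} := by
    refine (isCompact_closedBall (0 : m → ℝ) 1).of_isClosed_subset
      (isClosed_eq (by simp only [dotProduct]; fun_prop) continuous_const) fun x hx => ?_
    rw [Metric.mem_closedBall, dist_zero_right, pi_norm_le_iff_of_nonneg zero_le_one]
    intro i
    rw [Real.norm_eq_abs, abs_le_one_iff_mul_self_le_one, ← hx.out]
    exact Finset.single_le_sum (fun j _ => mul_self_nonneg (x j)) (Finset.mem_univ i)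
  have hcont : Continuous fun x : m → ℝ => x ⬝ᵥ M *ᵥ x := by
    simp only [dotProduct, mulVec]
    fun_prop
  refine (hsphere.image hcont).bddBelow.mono ?_
  rintro _ ⟨x, rfl⟩
  exact ⟨x.1, x.2, rfl⟩

lemma lamMin_mul_dotProduct_le {m : Type*} [Fintype m] (M : Matrix m m ℝ) (v : m → ℝ) :
    lamMin M * (v ⬝ᵥ v) ≤ v ⬝ᵥ M *ᵥ v := by
  rcases eq_or_ne v 0 with rfl | hv
  · simp
  have hs : 0 < v ⬝ᵥ v :=
    (dotProduct_self_star_nonneg v).lt_of_ne' (dotProduct_self_eq_zero.not.mpr hv)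
  set t := (√(v ⬝ᵥ v))⁻¹
  have htt : t * t = (v ⬝ᵥ v)⁻¹ := by rw [← mul_inv, Real.mul_self_sqrt hs.le]
  have hunit : (t • v) ⬝ᵥ (t • v) = 1 := by
    rw [smul_dotProduct, dotProduct_smul, smul_eq_mul, smul_eq_mul, ← mul_assoc, htt,
      inv_mul_cancel₀ hs.ne']
  have hle : lamMin M ≤ (v ⬝ᵥ v)⁻¹ * (v ⬝ᵥ M *ᵥ v) := by
    refine (ciInf_le (bddBelow_range_dotProduct_mulVec_unit M) ⟨t • v, hunit⟩).trans_eq ?_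
    rw [mulVec_smul, smul_dotProduct, dotProduct_smul, smul_eq_mul, smul_eq_mul, ← mul_assoc, htt]
  rwa [le_inv_mul_iff₀ hs, mul_comm] at hle

section BlockMatrix

variable {n : ℕ}

lemma blk3_isHermitian {A B C E F K : Matrix (Fin n) (Fin n) ℝ} (hA : A.IsHermitian)
    (hE : E.IsHermitian) (hK : K.IsHermitian) :
    (blk3 A B C Bᴴ E F Cᴴ Fᴴ K).IsHermitian :=
  hA.fromBlocks (conjTranspose_fromCols_eq_fromRows_conjTranspose B C)
    (hE.fromBlocks rfl hK)

def coupling (d : Fin n → ℝ) : Matrix (Fin n ⊕ Fin n ⊕ Fin n) (Fin n ⊕ Fin n ⊕ Fin n) ℝ :=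
  blk3 0 (diagonal d) 0 (diagonal d) 0 0 0 0 0

lemma coupling_isHermitian (d : Fin n → ℝ) : (coupling d).IsHermitian := by
  simpa [coupling] using
    blk3_isHermitian (B := diagonal d) (C := 0) (F := 0) isHermitian_zero isHermitian_zero
      isHermitian_zero

lemma dotProduct_coupling_mulVec (d : Fin n → ℝ) (v : Fin n ⊕ Fin n ⊕ Fin n → ℝ) :
    v ⬝ᵥ coupling d *ᵥ v = ∑ i, 2 * d i * v (.inl i) * v (.inr (.inl i)) := by
  simp only [dotProduct, mulVec, coupling, blk3, fromBlocks_zero, Fintype.sum_sum_type,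
    ← Finset.sum_add_distrib, Finset.mul_sum, fromBlocks_apply₁₁, Matrix.zero_apply, zero_mul,
    fromBlocks_apply₁₂, fromCols_apply_inl, diagonal_apply, ite_mul, fromCols_apply_inr, add_zero,
    zero_add, mul_ite, mul_zero, Finset.sum_ite_eq, Finset.mem_univ, ↓reduceIte,
    fromBlocks_apply₂₁, fromBlocks_apply₂₂, fromRows_apply_inl, fromRows_apply_inr,
    Finset.sum_const_zero]
  exact Finset.sum_congr rfl fun i _ => by ring

end BlockMatrix

section Densities

variable {n : ℕ} {ρ : Fin n → ℝ}

lemma alphaN_eq_div (hρ : ∀ i, 0 < ρ i) (hL : n - 1 < n) (i : Fin n) :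
    alphaN n ρ i = ρ i / ρ ⟨n - 1, hL⟩ := by
  rw [alphaN, dif_pos hL, alpha]
  split_ifs with hi
  · rfl
  · have hlast : i = ⟨n - 1, hL⟩ :=
      Fin.ext (le_antisymm (Nat.le_sub_one_of_lt i.isLt) (not_lt.mp hi))
    rw [hlast, div_self (hρ _).ne']

lemma alphaN_pos (hρ : ∀ i, 0 < ρ i) (i : Fin n) : 0 < alphaN n ρ i := by
  rw [alphaN_eq_div hρ (by have := i.isLt; omega)]
  exact div_pos (hρ i) (hρ _)

lemma alphaN_mul_alpha (hρ : ∀ i, 0 < ρ i) (i k : Fin n) :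
    alphaN n ρ i * alpha n ρ i k = alphaN n ρ (min i k) := by
  have hL : n - 1 < n := by have := i.isLt; omega
  rw [alpha]
  split_ifs with hki
  · rw [min_eq_right hki.le, alphaN_eq_div hρ hL, alphaN_eq_div hρ hL]
    field_simp [(hρ i).ne']
  · rw [min_eq_left (not_lt.mp hki), mul_one]

lemma Delta_mul_Gam_isHermitian (hρ : ∀ i, 0 < ρ i) : (Delta n ρ * Gam n ρ).IsHermitian := by
  ext i k
  simp [Delta, Gam, diagonal_mul, alphaN_mul_alpha hρ, min_comm]

lemma Sx_eq_S0_add_coupling (h u : Fin n → ℝ) (u₀ : ℝ) :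
    Sx n ρ h u u₀ = S0 n ρ h + coupling fun i => alphaN n ρ i * (u i - u₀) := by
  have hD : Delta n ρ * (diagonal u - u₀ • 1) = diagonal fun i => alphaN n ρ i * (u i - u₀) := by
    rw [smul_one_eq_diagonal, diagonal_sub, Delta, diagonal_mul_diagonal]
  ext (i | i | i) (j | j | j) <;> simp [Sx, S0, coupling, blk3, hD]

lemma S0_isHermitian (hρ : ∀ i, 0 < ρ i) (h : Fin n → ℝ) : (S0 n ρ h).IsHermitian := by
  have hH : (Delta n ρ * diagonal h).IsHermitian := by
    rw [Delta, diagonal_mul_diagonal]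
    exact isHermitian_diagonal _
  simpa [S0] using
    blk3_isHermitian (B := 0) (C := 0) (F := 0) (Delta_mul_Gam_isHermitian hρ) hH hH

end Densities

lemma coupled_form_pos {M d a b c : ℝ} (hd : |d| < M) (habc : a ≠ 0 ∨ b ≠ 0 ∨ c ≠ 0) :
    0 < M * (a * a + b * b + c * c) + 2 * d * a * b := by
  have hM : 0 < M := (abs_nonneg d).trans_lt hd
  have hab : -(2 * d * a * b) ≤ |d| * (a * a + b * b) := by
    rcases abs_cases d with ⟨hd', -⟩ | ⟨hd', -⟩ <;> rw [hd'] <;>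
      nlinarith [sq_nonneg (a + b), sq_nonneg (a - b), abs_nonneg d]
  have hpos : 0 < (M - |d|) * (a * a + b * b) + M * (c * c) := by
    rcases habc with ha | hb | hc
    · nlinarith [mul_self_pos.mpr ha, mul_self_nonneg b, mul_self_nonneg c]
    · nlinarith [mul_self_pos.mpr hb, mul_self_nonneg a, mul_self_nonneg c]
    · nlinarith [mul_self_pos.mpr hc, mul_self_nonneg a, mul_self_nonneg b]
  nlinarith

lemma coupled_form_nonneg {M d : ℝ} (hd : |d| < M) (a b c : ℝ) :
    0 ≤ M * (a * a + b * b + c * c) + 2 * d * a * b := by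
  by_cases habc : a ≠ 0 ∨ b ≠ 0 ∨ c ≠ 0
  · exact (coupled_form_pos hd habc).le
  · simp_all

lemma mul_dotProduct_self_add_coupling_pos {n : ℕ} {M : ℝ} {d : Fin n → ℝ}
    (hd : ∀ i, |d i| < M) {v : Fin n ⊕ Fin n ⊕ Fin n → ℝ} (hv : v ≠ 0) :
    0 < M * (v ⬝ᵥ v) + v ⬝ᵥ coupling d *ᵥ v := by
  set a := fun i => v (.inl i)
  set b := fun i => v (.inr (.inl i))
  set c := fun i => v (.inr (.inr i))
  have hsum : M * (v ⬝ᵥ v) + v ⬝ᵥ coupling d *ᵥ v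
      = ∑ i, (M * (a i * a i + b i * b i + c i * c i) + 2 * d i * a i * b i) := by
    rw [dotProduct_coupling_mulVec]
    simp only [dotProduct, Fintype.sum_sum_type, Finset.mul_sum, ← Finset.sum_add_distrib]
    exact Finset.sum_congr rfl fun i _ => by ring
  obtain ⟨p, hp⟩ := Function.ne_iff.mp hv
  obtain ⟨i, habc⟩ : ∃ i, a i ≠ 0 ∨ b i ≠ 0 ∨ c i ≠ 0 := by
    rcases p with i | i | i
    exacts [⟨i, .inl hp⟩, ⟨i, .inr (.inl hp)⟩, ⟨i, .inr (.inr hp)⟩]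
  rw [hsum]
  exact Finset.sum_pos' (fun j _ => coupled_form_nonneg (hd j) _ _ _)
    ⟨i, Finset.mem_univ i, coupled_form_pos (hd i) habc⟩

theorem stmt7_general (n : ℕ) (ρ : Fin n → ℝ) (hρ : ∀ i, 0 < ρ i)
    (h : Fin n → ℝ)
    (u : Fin n → ℝ) (u₀ : ℝ)
    (hu : ∀ i, alphaN n ρ i * |u i - u₀| < lamMin (S0 n ρ h)) :
    (Sx n ρ h u u₀).PosDef := by
  have hd : ∀ i, |alphaN n ρ i * (u i - u₀)| < lamMin (S0 n ρ h) := fun i => by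
    rw [abs_mul, abs_of_pos (alphaN_pos hρ i)]
    exact hu i
  rw [Sx_eq_S0_add_coupling]
  refine .of_dotProduct_mulVec_pos ((S0_isHermitian hρ h).add (coupling_isHermitian _))
    fun v hv => ?_
  rw [star_trivial, add_mulVec, dotProduct_add]
  calc 0 < lamMin (S0 n ρ h) * (v ⬝ᵥ v) + v ⬝ᵥ coupling _ *ᵥ v :=
        mul_dotProduct_self_add_coupling_pos hd hv
    _ ≤ _ := add_le_add_left (lamMin_mul_dotProduct_le _ v) _

/-- If `α_{n,i}|uᵢ − u₀| < λ_min(S⁰_x(h,γ))` for all `i`, then `S_x(w,γ,u₀)` is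
positive definite. -/
theorem stmt7 (n : ℕ) (hn : 2 ≤ n) (ρ : Fin n → ℝ) (hρ : ∀ i, 0 < ρ i)
    (h : Fin n → ℝ) (hh : ∀ i, 0 < h i)
    (hγ : ∀ i : Fin (n - 1), 0 < gam n ρ i ∧ gam n ρ i < 1)
    (u : Fin n → ℝ) (u₀ : ℝ)
    (hu : ∀ i, alphaN n ρ i * |u i - u₀| < lamMin (S0 n ρ h)) :
    (Sx n ρ h u u₀).PosDef :=
  stmt7_general n ρ hρ h u u₀ hu

end MLSW7
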